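/- In 2-neighbour bootstrap percolation on [n]^2, every percolating set of size n requires at least n − 1 time steps to percolate. Hence m_2(n) = n − 1. -/

import Mathlib

/-- The grid `[n]^d = {1,...,n}^d`, embedded in `ℕ^d`. -/
def gridSet (n d : ℕ) : Set (Fin d → ℕ) := {v | ∀ i, 1 ≤ v i ∧ v i ≤ n}

/-- Adjacency: differ by 1 in exactly one coordinate. -/
def gridAdj {d : ℕ} (u v : Fin d → ℕ) : Prop :=
  ∃ j, (u j = v j + 1 ∨ v j = u j + 1) ∧ ∀ i, i ≠ j → u i = v i

/-- One round of `r`-neighbour bootstrap percolation on `[n]^d`. -/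
def bpStep (n d r : ℕ) (S : Set (Fin d → ℕ)) : Set (Fin d → ℕ) :=
  S ∪ {v ∈ gridSet n d | r ≤ {u ∈ S | gridAdj u v}.ncard}

/-- Infected set after `t` rounds, starting from `A`. -/
def infected (n d r : ℕ) (A : Set (Fin d → ℕ)) (t : ℕ) : Set (Fin d → ℕ) :=
  (bpStep n d r)^[t] A

/-- The closure of `A`: all eventually infected vertices. -/
def bpClosure (n d r : ℕ) (A : Set (Fin d → ℕ)) : Set (Fin d → ℕ) :=
  ⋃ t, infected n d r A t

/-- `A` percolates if every grid vertex is eventually infected. -/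
def percolates (n d r : ℕ) (A : Set (Fin d → ℕ)) : Prop :=
  gridSet n d ⊆ bpClosure n d r A

/-- Percolation time: least `t` with the whole grid infected. -/
noncomputable def percTime (n d r : ℕ) (A : Set (Fin d → ℕ)) : ℕ :=
  sInf {t | gridSet n d ⊆ infected n d r A t}

/-- `V_k`: grid vertices of coordinate sum `k`. -/
def hyperplane (n d k : ℕ) : Set (Fin d → ℕ) := {v ∈ gridSet n d | ∑ i, v i = k}

/-- The "cyclic combination" set `A = ⋃_{i=1}^d V_{in}`. -/
def diagUnion (n d : ℕ) : Set (Fin d → ℕ) :=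
  ⋃ i ∈ Finset.Icc 1 d, hyperplane n d (i * n)


/-!
Let `τ` be the infection time of a percolating set of size `n`. Every vertex outside the seed set
has at least two neighbours infected strictly earlier, so summing over the `n² - n` non-seeds
gives at least `2(n² - n)` edges of the grid along which `τ` increases. The grid has exactly
`2n(n - 1)` edges, so equality holds throughout: no edge joins two vertices infected at the same
time, and every non-seed has exactly two earlier neighbours. Following strictly increasing edges
from the centre of the grid therefore ends at a vertex whose neighbours are all earlier, i.e. a
vertex of degree two, i.e. a corner. Since `τ` grows by at least one per step, starting from the
later of two adjacent central vertices (so from `τ ≥ 1`, at distance at least `n - 2` from every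
corner) reaches a vertex infected at time at least `n - 1`. The diagonal shows that `n - 1` is
attained.
-/

open Finset

namespace SimpleGraph

instance (n : ℕ) : DecidableRel (pathGraph n).Adj :=
  fun _ _ => decidable_of_iff' _ pathGraph_adj

section Counting

variable {V : Type*} (G : SimpleGraph V) [Fintype V] [DecidableRel G.Adj]

def earlierNeighborFinset (τ : V → ℕ) (v : V) : Finset V := {u ∈ G.neighborFinset v | τ u < τ v}

theorem sum_card_neighborFinset_filter_swap (r : V → V → Prop) [DecidableRel r] :
    ∑ v, #{u ∈ G.neighborFinset v | r u v} = ∑ v, #{u ∈ G.neighborFinset v | r v u} := by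
  simp only [card_filter, sum_filter, neighborFinset_eq_filter]
  rw [sum_comm]
  simp only [G.adj_comm]

theorem degree_eq_card_lt_add_card_gt_add_card_eq (τ : V → ℕ) (v : V) :
    G.degree v = #{u ∈ G.neighborFinset v | τ u < τ v} + #{u ∈ G.neighborFinset v | τ v < τ u}
      + #{u ∈ G.neighborFinset v | τ u = τ v} := by
  rw [← card_neighborFinset_eq_degree, card_eq_sum_ones, card_filter, card_filter, card_filter,
    ← sum_add_distrib, ← sum_add_distrib]
  refine sum_congr rfl fun u _ => ?_
  split_ifs <;> omega

theorem sum_degree_eq_two_mul_sum_card_earlierNeighborFinset_add (τ : V → ℕ) :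
    ∑ v, G.degree v = 2 * ∑ v, #(G.earlierNeighborFinset τ v)
      + ∑ v, #{u ∈ G.neighborFinset v | τ u = τ v} := by
  simp only [degree_eq_card_lt_add_card_gt_add_card_eq G τ, sum_add_distrib, earlierNeighborFinset,
    ← G.sum_card_neighborFinset_filter_swap fun u v => τ u < τ v]
  ring

/-- Counting each edge along which `τ` increases once, at its later end, leaves no room for an edge
with equal values at its ends, nor for a third earlier neighbour. -/
theorem ne_of_adj_and_card_earlierNeighborFinset_eq_two (τ : V → ℕ)
    (hdeg : ∑ v, G.degree v ≤ 4 * #{v | τ v ≠ 0})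
    (hearlier : ∀ v, τ v ≠ 0 → 2 ≤ #(G.earlierNeighborFinset τ v)) :
    (∀ u v, G.Adj u v → τ u ≠ τ v) ∧ ∀ v, τ v ≠ 0 → #(G.earlierNeighborFinset τ v) = 2 := by
  have hseeds : ∑ v, #(G.earlierNeighborFinset τ v)
      = ∑ v ∈ {v | τ v ≠ 0}, #(G.earlierNeighborFinset τ v) := by
    refine (sum_subset (subset_univ _) fun v _ hv => ?_).symm
    simp only [mem_filter, mem_univ, true_and, not_not] at hv
    simp [earlierNeighborFinset, hv]
  have hlow : ∑ v ∈ {v | τ v ≠ 0}, 2 ≤ ∑ v ∈ {v | τ v ≠ 0}, #(G.earlierNeighborFinset τ v) :=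
    sum_le_sum fun v hv => hearlier v (mem_filter.1 hv).2
  have hsplit := G.sum_degree_eq_two_mul_sum_card_earlierNeighborFinset_add τ
  rw [sum_const, smul_eq_mul] at hlow
  have hties : ∑ v, #{u ∈ G.neighborFinset v | τ u = τ v} = 0 := by omega
  have htight : ∑ v ∈ {v | τ v ≠ 0}, 2 = ∑ v ∈ {v | τ v ≠ 0}, #(G.earlierNeighborFinset τ v) := by
    rw [sum_const, smul_eq_mul]
    omega
  refine ⟨fun u v huv htie => ?_, fun v hv => ?_⟩
  · have := (sum_eq_zero_iff.1 hties) v (mem_univ v)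
    rw [card_eq_zero, filter_eq_empty_iff] at this
    exact this ((G.mem_neighborFinset v u).2 huv.symm) htie
  · exact ((sum_eq_sum_iff_of_le fun v hv => hearlier v (mem_filter.1 hv).2).1 htight v
      (mem_filter.2 ⟨mem_univ v, hv⟩)).symm

theorem degree_le_two_of_local_max (τ : V → ℕ) (hties : ∀ u v, G.Adj u v → τ u ≠ τ v)
    (htwo : ∀ v, τ v ≠ 0 → #(G.earlierNeighborFinset τ v) = 2) {c : V}
    (hc : ∀ u, G.Adj c u → τ u ≤ τ c) : G.degree c ≤ 2 := by
  have hall : G.earlierNeighborFinset τ c = G.neighborFinset c :=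
    filter_true_of_mem fun u hu => have hcu := (G.mem_neighborFinset c u).1 hu
      lt_of_le_of_ne (hc u hcu) (hties u c hcu.symm)
  rw [← card_neighborFinset_eq_degree, ← hall]
  by_cases h0 : τ c = 0
  · rw [earlierNeighborFinset, card_eq_zero.2 (filter_eq_empty_iff.2 fun u _ => by omega)]
    omega
  · rw [htwo c h0]

end Counting

theorem exists_walk_to_local_max {V : Type*} (G : SimpleGraph V) [Finite V] (τ : V → ℕ) (v : V) :
    ∃ c, (∀ u, G.Adj c u → τ u ≤ τ c) ∧ ∃ w : G.Walk v c, τ v + w.length ≤ τ c := by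
  obtain ⟨N, hN⟩ := (Set.finite_range τ).bddAbove
  induction v using (measure fun v => N - τ v).wf.induction with
  | h v ih =>
    by_cases hmax : ∀ u, G.Adj v u → τ u ≤ τ v
    · exact ⟨v, hmax, Walk.nil, by simp⟩
    push Not at hmax
    obtain ⟨u, hvu, hlt⟩ := hmax
    have hu : τ u ≤ N := hN ⟨u, rfl⟩
    obtain ⟨c, hc, w, hw⟩ := ih u (show N - τ u < N - τ v by omega)
    exact ⟨c, hc, Walk.cons hvu w, by simp only [Walk.length_cons]; omega⟩

theorem pathGraph_sum_degree (n : ℕ) : ∑ x, (pathGraph n).degree x = 2 * (n - 1) := by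
  have hsucc (x : Fin n) :
      ∑ y : Fin n, (if x.val + 1 = y.val then 1 else 0) = if x.val + 1 < n then 1 else 0 := by
    rw [Fin.sum_univ_eq_sum_range (fun k => if x.val + 1 = k then 1 else 0), sum_ite_eq]
    simp
  have hcount : ∑ x : Fin n, (if x.val + 1 < n then 1 else 0) = n - 1 := by
    rw [Fin.sum_univ_eq_sum_range (fun k => if k + 1 < n then 1 else 0), ← card_filter,
      show {k ∈ range n | k + 1 < n} = range (n - 1) by ext; simp; omega, card_range]
  calc ∑ x, (pathGraph n).degree x
      = ∑ x : Fin n, ∑ y : Fin n,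
          ((if x.val + 1 = y.val then 1 else 0) + (if y.val + 1 = x.val then 1 else 0)) := by
        refine sum_congr rfl fun x _ => ?_
        rw [← card_neighborFinset_eq_degree, neighborFinset_eq_filter, card_filter]
        refine sum_congr rfl fun y _ => ?_
        simp only [pathGraph_adj]
        split_ifs <;> omega
    _ = 2 * (n - 1) := by
        rw [sum_congr rfl fun x _ => sum_add_distrib, sum_add_distrib,
          sum_comm (f := fun x y : Fin n => if y.val + 1 = x.val then 1 else 0)]
        simp only [hsucc, hcount]
        ring

theorem pathGraph_one_le_degree {n : ℕ} (hn : 2 ≤ n) (x : Fin n) :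
    1 ≤ (pathGraph n).degree x := by
  rw [← card_neighborFinset_eq_degree, Nat.one_le_iff_ne_zero, Ne, card_eq_zero, ← Ne,
    ← nonempty_iff_ne_empty]
  by_cases hx : x.val + 1 < n
  · exact ⟨⟨x.val + 1, hx⟩, by simp [pathGraph_adj]⟩
  · exact ⟨⟨x.val - 1, by omega⟩, by simp [pathGraph_adj]; omega⟩

theorem pathGraph_two_le_degree {n : ℕ} {x : Fin n} (h₀ : 0 < x.val) (h₁ : x.val + 1 < n) :
    2 ≤ (pathGraph n).degree x := by
  rw [← card_neighborFinset_eq_degree]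
  exact one_lt_card.2 ⟨⟨x.val + 1, h₁⟩, by simp [pathGraph_adj], ⟨x.val - 1, by omega⟩,
    by simp [pathGraph_adj]; omega, by simp [Fin.ext_iff]; omega⟩

end SimpleGraph

open SimpleGraph

def gridGraph (n : ℕ) : SimpleGraph (Fin n × Fin n) := pathGraph n □ pathGraph n

theorem gridGraph_adj {n : ℕ} {p q : Fin n × Fin n} :
    (gridGraph n).Adj p q ↔
      (p.1.val + 1 = q.1.val ∨ q.1.val + 1 = p.1.val) ∧ p.2.val = q.2.val ∨
        (p.2.val + 1 = q.2.val ∨ q.2.val + 1 = p.2.val) ∧ p.1.val = q.1.val := by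
  simp [gridGraph, boxProd_adj, pathGraph_adj, Fin.ext_iff]

instance (n : ℕ) : DecidableRel (gridGraph n).Adj := fun _ _ => decidable_of_iff' _ gridGraph_adj

theorem gridGraph_degree {n : ℕ} (p : Fin n × Fin n) :
    (gridGraph n).degree p = (pathGraph n).degree p.1 + (pathGraph n).degree p.2 := by
  unfold gridGraph
  convert degree_boxProd p

theorem gridGraph_sum_degree (n : ℕ) : ∑ p, (gridGraph n).degree p = 4 * (n * (n - 1)) := by
  simp only [gridGraph_degree, Fintype.sum_prod_type, sum_add_distrib, sum_const, card_univ,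
    Fintype.card_fin, smul_eq_mul, pathGraph_sum_degree]
  rw [sum_comm]
  simp only [sum_const, card_univ, Fintype.card_fin, smul_eq_mul, pathGraph_sum_degree]
  ring

theorem gridGraph_corner_of_degree_le_two {n : ℕ} (hn : 2 ≤ n) {p : Fin n × Fin n}
    (h : (gridGraph n).degree p ≤ 2) :
    (p.1.val = 0 ∨ p.1.val + 1 = n) ∧ (p.2.val = 0 ∨ p.2.val + 1 = n) := by
  rw [gridGraph_degree] at h
  have h₁ := pathGraph_one_le_degree hn p.1
  have h₂ := pathGraph_one_le_degree hn p.2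
  constructor <;> by_contra hc <;> push Not at hc
  · have := pathGraph_two_le_degree (x := p.1) (by omega) (by omega)
    omega
  · have := pathGraph_two_le_degree (x := p.2) (by omega) (by omega)
    omega

theorem gridGraph_l1_le_length {n : ℕ} {p q : Fin n × Fin n} (w : (gridGraph n).Walk p q) :
    (p.1 - q.1 : ℕ) + (q.1 - p.1) + (p.2 - q.2) + (q.2 - p.2) ≤ w.length := by
  induction w with
  | nil => simp
  | cons h w ih =>
    rw [Walk.length_cons]
    rw [gridGraph_adj] at h
    omega

theorem gridGraph_exists_sub_one_le {n : ℕ} (hn : 2 ≤ n) (τ : Fin n × Fin n → ℕ)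
    (hties : ∀ p q, (gridGraph n).Adj p q → τ p ≠ τ q)
    (htwo : ∀ p, τ p ≠ 0 → #((gridGraph n).earlierNeighborFinset τ p) = 2) :
    ∃ c, n - 1 ≤ τ c := by
  let a : Fin n × Fin n := (⟨n / 2, by omega⟩, ⟨n / 2, by omega⟩)
  let b : Fin n × Fin n := (⟨n / 2 - 1, by omega⟩, ⟨n / 2, by omega⟩)
  have hab : τ a ≠ τ b :=
    hties a b (gridGraph_adj.2 (Or.inl ⟨Or.inr (by simp only [a, b]; omega), rfl⟩))
  obtain ⟨r, hr, hr₂, hr₁⟩ : ∃ r : Fin n × Fin n,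
      1 ≤ τ r ∧ r.2.val = n / 2 ∧ (r.1.val = n / 2 ∨ r.1.val + 1 = n / 2) := by
    rcases Nat.lt_or_gt_of_ne hab with h | h
    · exact ⟨b, by omega, rfl, Or.inr (by simp only [b]; omega)⟩
    · exact ⟨a, by omega, rfl, Or.inl rfl⟩
  obtain ⟨c, hc, w, hw⟩ := (gridGraph n).exists_walk_to_local_max τ r
  have hcorner := gridGraph_corner_of_degree_le_two hn
    ((gridGraph n).degree_le_two_of_local_max τ hties htwo hc)
  have hlen := gridGraph_l1_le_length w
  exact ⟨c, by omega⟩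

section Dynamics

variable {n d r : ℕ} {A : Set (Fin d → ℕ)}

theorem infected_succ (t : ℕ) : infected n d r A (t + 1) = bpStep n d r (infected n d r A t) :=
  Function.iterate_succ_apply' _ _ _

theorem infected_monotone : Monotone (infected n d r A) :=
  monotone_nat_of_le_succ fun t => by rw [infected_succ]; exact Set.subset_union_left

theorem infected_subset_gridSet (hA : A ⊆ gridSet n d) (t : ℕ) :
    infected n d r A t ⊆ gridSet n d := by
  induction t with
  | zero => exact hA
  | succ t ih =>
    rw [infected_succ]
    exact Set.union_subset ih fun _ hv => hv.1

theorem gridSet_finite (n d : ℕ) : (gridSet n d).Finite :=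
  (Set.finite_Icc (fun _ : Fin d => 1) fun _ => n).subset fun _ hv =>
    ⟨fun i => (hv i).1, fun i => (hv i).2⟩

theorem mem_bpStep_of_adj {S : Set (Fin d → ℕ)} (hS : S.Finite) {u w v : Fin d → ℕ}
    (hv : v ∈ gridSet n d) (huw : u ≠ w) (hu : u ∈ S) (hw : w ∈ S) (huv : gridAdj u v)
    (hwv : gridAdj w v) : v ∈ bpStep n d 2 S := by
  refine Or.inr ⟨hv, ?_⟩
  calc 2 = ({u, w} : Set (Fin d → ℕ)).ncard := (Set.ncard_pair huw).symm
    _ ≤ _ := Set.ncard_le_ncard (t := {x ∈ S | gridAdj x v})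
        (Set.insert_subset ⟨hu, huv⟩ (Set.singleton_subset_iff.2 ⟨hw, hwv⟩))
        (hS.subset fun _ hx => hx.1)

variable (n d r A) in
noncomputable def infectionTime (v : Fin d → ℕ) : ℕ := sInf {t | v ∈ infected n d r A t}

theorem infectionTime_le {v : Fin d → ℕ} {t : ℕ} (h : v ∈ infected n d r A t) :
    infectionTime n d r A v ≤ t :=
  Nat.sInf_le h

theorem mem_infected_infectionTime {v : Fin d → ℕ} (hv : v ∈ bpClosure n d r A) :
    v ∈ infected n d r A (infectionTime n d r A v) :=
  Nat.sInf_mem (Set.mem_iUnion.1 hv)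

theorem infectionTime_eq_zero_iff {v : Fin d → ℕ} (hv : v ∈ bpClosure n d r A) :
    infectionTime n d r A v = 0 ↔ v ∈ A :=
  ⟨fun h => by simpa [h, infected] using mem_infected_infectionTime hv,
    fun h => Nat.le_zero.1 (infectionTime_le h)⟩

theorem le_ncard_of_infectionTime_ne_zero {v : Fin d → ℕ} (hv : v ∈ bpClosure n d r A)
    (h : infectionTime n d r A v ≠ 0) :
    r ≤ {u ∈ infected n d r A (infectionTime n d r A v - 1) | gridAdj u v}.ncard := by
  have hmem := mem_infected_infectionTime hv
  rw [← Nat.sub_one_add_one h, infected_succ] at hmem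
  refine (hmem.resolve_left fun hprev => ?_).2
  have := infectionTime_le hprev
  omega

theorem infectionTime_le_percTime (hA : percolates n d r A) {v : Fin d → ℕ}
    (hv : v ∈ gridSet n d) : infectionTime n d r A v ≤ percTime n d r A := by
  obtain ⟨T, hT⟩ := ((gridSet_finite n d).image (infectionTime n d r A)).bddAbove
  have hall : gridSet n d ⊆ infected n d r A T := fun u hu =>
    infected_monotone (hT ⟨u, hu, rfl⟩) (mem_infected_infectionTime (hA hu))
  exact infectionTime_le (Nat.sInf_mem (s := {t | gridSet n d ⊆ infected n d r A t}) ⟨T, hall⟩ hv)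

end Dynamics

def gridEmb (n : ℕ) (p : Fin n × Fin n) : Fin 2 → ℕ := ![p.1.val + 1, p.2.val + 1]

theorem gridEmb_injective (n : ℕ) : Function.Injective (gridEmb n) := by
  intro p q h
  have h₀ := congrFun h 0
  have h₁ := congrFun h 1
  simp only [gridEmb, Matrix.cons_val_zero, Matrix.cons_val_one, add_left_inj] at h₀ h₁
  exact Prod.ext (Fin.ext h₀) (Fin.ext h₁)

theorem range_gridEmb (n : ℕ) : Set.range (gridEmb n) = gridSet n 2 := by
  ext v
  constructor
  · rintro ⟨p, rfl⟩ i
    fin_cases i <;> simp [gridEmb]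
  · intro hv
    have h₀ := hv 0
    have h₁ := hv 1
    refine ⟨(⟨v 0 - 1, by omega⟩, ⟨v 1 - 1, by omega⟩), funext fun i => ?_⟩
    fin_cases i <;> simp [gridEmb] <;> omega

theorem gridEmb_mem_gridSet (n : ℕ) (p : Fin n × Fin n) : gridEmb n p ∈ gridSet n 2 :=
  range_gridEmb n ▸ Set.mem_range_self p

theorem gridAdj_gridEmb {n : ℕ} {p q : Fin n × Fin n} :
    gridAdj (gridEmb n p) (gridEmb n q) ↔ (gridGraph n).Adj p q := by
  simp only [gridAdj, Fin.exists_fin_two, Fin.forall_fin_two, gridEmb, gridGraph_adj]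
  simp
  omega

noncomputable def gridInfectionTime (n : ℕ) (A : Set (Fin 2 → ℕ)) (p : Fin n × Fin n) : ℕ :=
  infectionTime n 2 2 A (gridEmb n p)

section LowerBound

variable {n : ℕ} {A : Set (Fin 2 → ℕ)}

theorem card_gridInfectionTime_eq_zero (hA : A ⊆ gridSet n 2) (hperc : percolates n 2 2 A) :
    #{p | gridInfectionTime n A p = 0} = A.ncard := by
  rw [← Set.ncard_preimage_of_injective_subset_range (gridEmb_injective n)
    (range_gridEmb n ▸ hA), ← Set.ncard_coe_finset]
  congr 1
  ext p
  rw [Set.mem_preimage, coe_filter]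
  exact (and_iff_right (mem_univ p)).trans
    (infectionTime_eq_zero_iff (hperc (gridEmb_mem_gridSet n p)))

theorem two_le_card_earlierNeighborFinset (hA : A ⊆ gridSet n 2) (hperc : percolates n 2 2 A)
    (p : Fin n × Fin n) (hp : gridInfectionTime n A p ≠ 0) :
    2 ≤ #((gridGraph n).earlierNeighborFinset (gridInfectionTime n A) p) := by
  have hsub : {u ∈ infected n 2 2 A (gridInfectionTime n A p - 1) | gridAdj u (gridEmb n p)} ⊆
      gridEmb n '' ↑((gridGraph n).earlierNeighborFinset (gridInfectionTime n A) p) := by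
    rintro u ⟨hu, hadj⟩
    obtain ⟨q, rfl⟩ : u ∈ Set.range (gridEmb n) :=
      range_gridEmb n ▸ infected_subset_gridSet hA _ hu
    have : gridInfectionTime n A q ≤ _ := infectionTime_le hu
    refine ⟨q, ?_, rfl⟩
    simp only [earlierNeighborFinset, coe_filter, mem_neighborFinset, Set.mem_ofPred_eq]
    exact ⟨(gridAdj_gridEmb.1 hadj).symm, by omega⟩
  calc 2 ≤ _ := le_ncard_of_infectionTime_ne_zero (hperc (gridEmb_mem_gridSet n p)) hp
    _ ≤ _ := Set.ncard_le_ncard hsub (Set.toFinite _)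
    _ = _ := by rw [Set.ncard_image_of_injective _ (gridEmb_injective n), Set.ncard_coe_finset]

theorem sub_one_le_percTime (hA : A ⊆ gridSet n 2) (hperc : percolates n 2 2 A)
    (hcard : A.ncard = n) : n - 1 ≤ percTime n 2 2 A := by
  rcases Nat.lt_or_ge n 2 with hn | hn
  · omega
  have hlate : #{p | gridInfectionTime n A p ≠ 0} = n * (n - 1) := by
    have := card_filter_add_card_filter_not (s := univ) fun p => gridInfectionTime n A p = 0
    rw [card_gridInfectionTime_eq_zero hA hperc, hcard, card_univ, Fintype.card_prod,
      Fintype.card_fin] at this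
    simp only [← ne_eq] at this
    rw [Nat.mul_sub_one]
    omega
  obtain ⟨hties, htwo⟩ := (gridGraph n).ne_of_adj_and_card_earlierNeighborFinset_eq_two _
    (by rw [gridGraph_sum_degree, hlate]) (two_le_card_earlierNeighborFinset hA hperc)
  obtain ⟨c, hc⟩ := gridGraph_exists_sub_one_le hn _ hties htwo
  exact hc.trans (infectionTime_le_percTime hperc (gridEmb_mem_gridSet n c))

end LowerBound

def gridDiagonal (n : ℕ) : Set (Fin 2 → ℕ) := Set.range fun i : Fin n => gridEmb n (i, i)

theorem gridDiagonal_subset_gridSet (n : ℕ) : gridDiagonal n ⊆ gridSet n 2 := by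
  rintro _ ⟨i, rfl⟩
  exact gridEmb_mem_gridSet n _

theorem ncard_gridDiagonal (n : ℕ) : (gridDiagonal n).ncard = n := by
  rw [gridDiagonal, Set.ncard_range_of_injective, Nat.card_eq_fintype_card, Fintype.card_fin]
  intro i j h
  simpa using gridEmb_injective n h

theorem gridEmb_mem_infected_gridDiagonal {n : ℕ} (t : ℕ) (p : Fin n × Fin n)
    (hp : (p.1 - p.2 : ℕ) + (p.2 - p.1) ≤ t) :
    gridEmb n p ∈ infected n 2 2 (gridDiagonal n) t := by
  induction t generalizing p with
  | zero =>
    exact ⟨p.1, congrArg (gridEmb n) (Prod.ext rfl (Fin.ext (show p.1.val = p.2.val by omega)))⟩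
  | succ t ih =>
    rcases Nat.lt_or_ge ((p.1 - p.2 : ℕ) + (p.2 - p.1)) (t + 1) with hlt | hge
    · exact infected_monotone t.le_succ (ih p (by omega))
    rw [infected_succ]
    have hfin := (gridSet_finite n 2).subset
      (infected_subset_gridSet (r := 2) (gridDiagonal_subset_gridSet n) t)
    -- `p` is infected by its two neighbours one step closer to the diagonal.
    rcases Nat.lt_or_gt_of_ne (show p.1.val ≠ p.2.val by omega) with h | h
    · let u : Fin n × Fin n := (⟨p.1 + 1, by omega⟩, p.2)
      let w : Fin n × Fin n := (p.1, ⟨p.2 - 1, by omega⟩)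
      refine mem_bpStep_of_adj hfin (gridEmb_mem_gridSet n p) ((gridEmb_injective n).ne ?_)
        (ih u ?_) (ih w ?_) (gridAdj_gridEmb.2 ?_) (gridAdj_gridEmb.2 ?_) <;>
        simp [u, w, gridGraph_adj, Prod.ext_iff, Fin.ext_iff] <;> omega
    · let u : Fin n × Fin n := (⟨p.1 - 1, by omega⟩, p.2)
      let w : Fin n × Fin n := (p.1, ⟨p.2 + 1, by omega⟩)
      refine mem_bpStep_of_adj hfin (gridEmb_mem_gridSet n p) ((gridEmb_injective n).ne ?_)
        (ih u ?_) (ih w ?_) (gridAdj_gridEmb.2 ?_) (gridAdj_gridEmb.2 ?_) <;>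
        simp [u, w, gridGraph_adj, Prod.ext_iff, Fin.ext_iff] <;> omega

theorem gridSet_subset_infected_gridDiagonal (n : ℕ) :
    gridSet n 2 ⊆ infected n 2 2 (gridDiagonal n) (n - 1) := by
  rw [← range_gridEmb]
  rintro _ ⟨p, rfl⟩
  exact gridEmb_mem_infected_gridDiagonal _ p (by omega)

theorem min_time_dim_two_general (n : ℕ) :
    (∀ A : Set (Fin 2 → ℕ), A ⊆ gridSet n 2 → percolates n 2 2 A → A.ncard = n →
      n - 1 ≤ percTime n 2 2 A) ∧
    sInf {T : ℕ | ∃ A : Set (Fin 2 → ℕ), A ⊆ gridSet n 2 ∧ percolates n 2 2 A ∧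
        A.ncard = n ∧ percTime n 2 2 A = T} = n - 1 := by
  have hperc : percolates n 2 2 (gridDiagonal n) := fun _ hv =>
    Set.mem_iUnion.2 ⟨n - 1, gridSet_subset_infected_gridDiagonal n hv⟩
  have hmem : n - 1 ∈ {T : ℕ | ∃ A : Set (Fin 2 → ℕ), A ⊆ gridSet n 2 ∧ percolates n 2 2 A ∧
      A.ncard = n ∧ percTime n 2 2 A = T} :=
    ⟨gridDiagonal n, gridDiagonal_subset_gridSet n, hperc, ncard_gridDiagonal n,
      le_antisymm (Nat.sInf_le (gridSet_subset_infected_gridDiagonal n))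
        (sub_one_le_percTime (gridDiagonal_subset_gridSet n) hperc (ncard_gridDiagonal n))⟩
  refine ⟨fun A hA hp hc => sub_one_le_percTime hA hp hc,
    le_antisymm (Nat.sInf_le hmem) (le_csInf ⟨_, hmem⟩ ?_)⟩
  rintro _ ⟨A, hA, hp, hc, rfl⟩
  exact sub_one_le_percTime hA hp hc

theorem min_time_dim_two (n : ℕ) (hn : 1 ≤ n) :
    (∀ A : Set (Fin 2 → ℕ), A ⊆ gridSet n 2 → percolates n 2 2 A → A.ncard = n →
      n - 1 ≤ percTime n 2 2 A) ∧
    sInf {T : ℕ | ∃ A : Set (Fin 2 → ℕ), A ⊆ gridSet n 2 ∧ percolates n 2 2 A ∧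
        A.ncard = n ∧ percTime n 2 2 A = T} = n - 1 :=
  min_time_dim_two_general n
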